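/- arXiv:2211.10652 — 9 statements merged into one kernel-verified Lean document; each statement's English description precedes it below -/
import Mathlib

section
/- Let ({f_n}_n, {τ_n}_n) be a Lipschitz p-ASF for a subset M of a Banach space X. Then the frame map factors as S_{f,τ} x = θ_τ(θ_f x) for all x ∈ M. Moreover, setting N := θ_τ^{-1}(M) ⊆ ℓ^p(ℕ), the map P_{f,τ} := θ_f ∘ S_{f,τ}^{-1} ∘ θ_τ is well defined from N into N, is Lipschitz on N, is idempotent (P_{f,τ}(P_{f,τ} a) = P_{f,τ} a for all a ∈ N), and its image is exactly θ_f(M); in particular P_{f,τ} is a Lipschitz projection of N onto θ_f(M). -/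
open Filter
open scoped ENNReal NNReal

noncomputable section

/-- A Lipschitz p-approximate Schauder frame for a subset `M` of a Banach space `X`:
`f` is the sequence of Lipschitz "analysis" functions, `τ` the sequence of frame vectors
(elements of `M`), `θf` the analysis map, `θτ` the synthesis operator, `S` the frame map
(an invertible bi-Lipschitz map of `M` with inverse `Sinv`), together with the
reconstruction property. -/
structure LipPASF (𝕂 : Type*) [RCLike 𝕂] (X : Type*) [NormedAddCommGroup X]
    [NormedSpace 𝕂 X] (p : ℝ≥0∞) [Fact (1 ≤ p)] (M : Set X) where
  f : ℕ → M → 𝕂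
  τ : ℕ → M
  f_lip : ∀ n, ∃ K : ℝ≥0, LipschitzWith K (f n)
  θf : M → lp (fun _ : ℕ => 𝕂) p
  θf_apply : ∀ (x : M) (n : ℕ), θf x n = f n x
  θf_lip : ∃ K : ℝ≥0, LipschitzWith K θf
  θτ : lp (fun _ : ℕ => 𝕂) p →L[𝕂] X
  θτ_sum : ∀ a : lp (fun _ : ℕ => 𝕂) p,
    Tendsto (fun N => ∑ n ∈ Finset.range N, a n • ((τ n : X))) atTop (nhds (θτ a))
  S : M → M
  S_sum : ∀ x : M,
    Tendsto (fun N => ∑ n ∈ Finset.range N, f n x • ((τ n : X))) atTop (nhds ((S x : X)))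
  Sinv : M → M
  left_inv : ∀ x, Sinv (S x) = x
  right_inv : ∀ x, S (Sinv x) = x
  S_lip : ∃ K : ℝ≥0, LipschitzWith K S
  Sinv_lip : ∃ K : ℝ≥0, LipschitzWith K Sinv
  recon : ∀ x : M,
    Tendsto (fun N => ∑ n ∈ Finset.range N, f n x • ((Sinv (τ n) : X))) atTop (nhds ((x : X)))

/-- The frame map factors as `S = θτ ∘ θf`, and on `N := θτ⁻¹(M)` the map
`P := θf ∘ S⁻¹ ∘ θτ` is a well-defined Lipschitz idempotent whose image is exactly `θf(M)`. -/
theorem stmt3 {𝕂 X : Type*} [RCLike 𝕂] [NormedAddCommGroup X] [NormedSpace 𝕂 X]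
    [CompleteSpace X] (p : ℝ≥0∞) [Fact (1 ≤ p)] (hp : p ≠ ∞) (M : Set X)
    (F : LipPASF 𝕂 X p M) :
    (∀ x : M, F.θτ (F.θf x) = (F.S x : X)) ∧
    ∃ P : {a : lp (fun _ : ℕ => 𝕂) p // F.θτ a ∈ M} →
          {a : lp (fun _ : ℕ => 𝕂) p // F.θτ a ∈ M},
      (∀ a, (P a : lp (fun _ : ℕ => 𝕂) p) = F.θf (F.Sinv ⟨F.θτ a, a.2⟩)) ∧
      (∃ K : ℝ≥0, LipschitzWith K P) ∧
      (∀ a, P (P a) = P a) ∧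
      Set.range (fun a => (P a : lp (fun _ : ℕ => 𝕂) p)) = Set.range F.θf := by

  have hfac : ∀ x : M, F.θτ (F.θf x) = (F.S x : X) := by
    intro x
    have h1 := F.θτ_sum (F.θf x)
    simp only [F.θf_apply] at h1
    exact tendsto_nhds_unique h1 (F.S_sum x)
  refine ⟨hfac, ?_⟩
  set N := {a : lp (fun _ : ℕ => 𝕂) p // F.θτ a ∈ M} with hN
  have mem : ∀ a : N, F.θτ (F.θf (F.Sinv ⟨F.θτ a.1, a.2⟩)) ∈ M := by
    intro a
    rw [hfac]
    exact (F.S (F.Sinv ⟨F.θτ a.1, a.2⟩)).2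
  refine ⟨fun a => ⟨F.θf (F.Sinv ⟨F.θτ a.1, a.2⟩), mem a⟩, fun a => rfl, ?_, ?_, ?_⟩
  · obtain ⟨Kf, hKf⟩ := F.θf_lip
    obtain ⟨Ks, hKs⟩ := F.Sinv_lip
    refine ⟨Kf * (Ks * ‖F.θτ‖₊), fun a b => ?_⟩
    have h1 : edist (F.Sinv ⟨F.θτ a.1, a.2⟩) (F.Sinv ⟨F.θτ b.1, b.2⟩)
        ≤ Ks * (‖F.θτ‖₊ * edist a b) := by
      refine le_trans (hKs _ _) ?_
      refine mul_le_mul_right ?_ _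
      have : edist (⟨F.θτ a.1, a.2⟩ : M) (⟨F.θτ b.1, b.2⟩ : M)
          = edist (F.θτ a.1) (F.θτ b.1) := rfl
      rw [this]
      have := F.θτ.lipschitz a.1 b.1
      refine le_trans this ?_
      refine mul_le_mul_right ?_ _
      exact le_of_eq rfl
    calc edist (⟨F.θf (F.Sinv ⟨F.θτ a.1, a.2⟩), mem a⟩ : N)
          (⟨F.θf (F.Sinv ⟨F.θτ b.1, b.2⟩), mem b⟩ : N)
        = edist (F.θf (F.Sinv ⟨F.θτ a.1, a.2⟩)) (F.θf (F.Sinv ⟨F.θτ b.1, b.2⟩)) := rfl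
      _ ≤ Kf * edist (F.Sinv ⟨F.θτ a.1, a.2⟩) (F.Sinv ⟨F.θτ b.1, b.2⟩) := hKf _ _
      _ ≤ Kf * (Ks * (‖F.θτ‖₊ * edist a b)) := mul_le_mul_right h1 _
      _ = ↑(Kf * (Ks * ‖F.θτ‖₊)) * edist a b := by
          push_cast; ring
  · intro a
    apply Subtype.ext
    show F.θf (F.Sinv ⟨F.θτ (F.θf (F.Sinv ⟨F.θτ a.1, a.2⟩)), _⟩) = _
    congr 1
    have : (⟨F.θτ (F.θf (F.Sinv ⟨F.θτ a.1, a.2⟩)), mem a⟩ : M)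
        = F.S (F.Sinv ⟨F.θτ a.1, a.2⟩) := Subtype.ext (hfac _)
    rw [this, F.left_inv]
  · apply Set.eq_of_subset_of_subset
    · rintro _ ⟨a, rfl⟩
      exact ⟨_, rfl⟩
    · rintro _ ⟨x, rfl⟩
      have hm : F.θτ (F.θf x) ∈ M := by rw [hfac]; exact (F.S x).2
      refine ⟨⟨F.θf x, hm⟩, ?_⟩
      show F.θf (F.Sinv ⟨F.θτ (F.θf x), hm⟩) = F.θf x
      congr 1
      have : (⟨F.θτ (F.θf x), hm⟩ : M) = F.S x := Subtype.ext (hfac x)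
      rw [this, F.left_inv]
end
end

section
/- Let M be a nonempty subset of a Banach space X, let {τ_n}_n be a sequence in M and {f_n}_n a sequence of Lipschitz functions f_n : M → 𝕂. The pair ({f_n}_n, {τ_n}_n) is a Lipschitz p-SF for M (i.e. a Lipschitz p-ASF whose frame map S_{f,τ} is the identity of M) if and only if there exist a Lipschitz map U : M → ℓ^p(ℕ) and a bounded linear operator V : ℓ^p(ℕ) → X such that f_n = ζ_n ∘ U and τ_n = V e_n for all n ∈ ℕ, V(U(M)) ⊆ M, V e_n ∈ M for all n ∈ ℕ, and V(Ux) = x for all x ∈ M. -/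
open Filter
open scoped ENNReal NNReal

noncomputable section

private lemma key_sum {𝕂 X : Type*} [RCLike 𝕂] [NormedAddCommGroup X] [NormedSpace 𝕂 X]
    {p : ℝ≥0∞} [Fact (1 ≤ p)] (hp : p ≠ ∞) (V : lp (fun _ : ℕ => 𝕂) p →L[𝕂] X)
    (a : lp (fun _ : ℕ => 𝕂) p) :
    Tendsto (fun N => ∑ n ∈ Finset.range N, a n • V (lp.single p n (1 : 𝕂))) atTop
      (nhds (V a)) := by
  have h := (lp.hasSum_single hp a).mapL V
  have h2 : ∀ n : ℕ, V (lp.single p n (a n)) = a n • V (lp.single p n (1 : 𝕂)) := by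
    intro n
    rw [← V.map_smul, ← lp.single_smul]
    norm_num
  simp only [h2] at h
  exact h.tendsto_sum_nat

/-- Characterization of Lipschitz p-SFs (Lipschitz p-ASFs whose frame map is the
identity): `(f, τ)` is a Lipschitz p-SF for `M` iff `fₙ = ζₙ ∘ U`, `τₙ = V eₙ` for a Lipschitz
map `U : M → ℓᵖ` and a bounded linear operator `V : ℓᵖ → X` with `V(U(M)) ⊆ M`, `V eₙ ∈ M`
and `V(Ux) = x` for all `x ∈ M`. -/
theorem stmt5 {𝕂 X : Type*} [RCLike 𝕂] [NormedAddCommGroup X] [NormedSpace 𝕂 X]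
    [CompleteSpace X] (p : ℝ≥0∞) [Fact (1 ≤ p)] (hp : p ≠ ∞) (M : Set X)
    (f : ℕ → M → 𝕂) (τ : ℕ → M) (hf : ∀ n, ∃ K : ℝ≥0, LipschitzWith K (f n)) :
    (∃ F : LipPASF 𝕂 X p M, F.f = f ∧ F.τ = τ ∧ F.S = id) ↔
    ∃ (U : M → lp (fun _ : ℕ => 𝕂) p) (V : lp (fun _ : ℕ => 𝕂) p →L[𝕂] X),
      (∃ K : ℝ≥0, LipschitzWith K U) ∧
      (∀ n (x : M), f n x = U x n) ∧
      (∀ n, (τ n : X) = V (lp.single p n (1 : 𝕂))) ∧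
      (∀ x : M, V (U x) ∈ M) ∧
      (∀ n, V (lp.single p n (1 : 𝕂)) ∈ M) ∧
      (∀ x : M, V (U x) = (x : X)) := by
  constructor
  · rintro ⟨F, hFf, hFτ, hFS⟩
    refine ⟨F.θf, F.θτ, F.θf_lip, ?_, ?_, ?_, ?_, ?_⟩
    · intro n x
      rw [F.θf_apply, hFf]
    · intro n
      have h1 := F.θτ_sum (lp.single p n (1 : 𝕂))
      have h2 : Tendsto (fun N => ∑ m ∈ Finset.range N,
          (lp.single p n (1 : 𝕂) : lp (fun _ : ℕ => 𝕂) p) m • ((F.τ m : X))) atTop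
          (nhds ((τ n : X))) := by
        apply Tendsto.congr' _ tendsto_const_nhds
        filter_upwards [eventually_ge_atTop (n + 1)] with N hN
        rw [Finset.sum_eq_single_of_mem n (Finset.mem_range.2 hN)]
        · rw [lp.single_apply_self, hFτ, one_smul]
        · intro m _ hm
          rw [lp.single_apply_ne p n _ hm, zero_smul]
      exact tendsto_nhds_unique h2 h1
    all_goals
      have hVU : ∀ x : M, F.θτ (F.θf x) = (x : X) := by
        intro x
        have h1 := F.θτ_sum (F.θf x)
        simp only [F.θf_apply] at h1
        have h2 := F.S_sum x
        simp only [hFf] at h1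
        simp only [hFf, hFS, id] at h2
        exact tendsto_nhds_unique h1 h2
    · intro x; rw [hVU]; exact x.2
    · intro n
      have h1 := F.θτ_sum (lp.single p n (1 : 𝕂))
      have h2 : Tendsto (fun N => ∑ m ∈ Finset.range N,
          (lp.single p n (1 : 𝕂) : lp (fun _ : ℕ => 𝕂) p) m • ((F.τ m : X))) atTop
          (nhds ((τ n : X))) := by
        apply Tendsto.congr' _ tendsto_const_nhds
        filter_upwards [eventually_ge_atTop (n + 1)] with N hN
        rw [Finset.sum_eq_single_of_mem n (Finset.mem_range.2 hN)]
        · rw [lp.single_apply_self, hFτ, one_smul]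
        · intro m _ hm
          rw [lp.single_apply_ne p n _ hm, zero_smul]
      rw [← tendsto_nhds_unique h2 h1]
      exact (τ n).2
    · exact hVU
  · rintro ⟨U, V, hU, hfU, hτV, hVUM, _, hVU⟩
    have hsum : ∀ x : M, Tendsto (fun N => ∑ n ∈ Finset.range N, f n x • ((τ n : X)))
        atTop (nhds ((x : X))) := by
      intro x
      have h := key_sum hp V (U x)
      simp only [← hfU, ← hτV, hVU] at h
      exact h
    refine ⟨{
      f := f, τ := τ, f_lip := hf
      θf := U
      θf_apply := fun x n => (hfU n x).symm
      θf_lip := hU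
      θτ := V
      θτ_sum := by
        intro a
        have h := key_sum hp V a
        simp only [← hτV] at h
        exact h
      S := id
      S_sum := hsum
      Sinv := id
      left_inv := fun _ => rfl
      right_inv := fun _ => rfl
      S_lip := ⟨1, LipschitzWith.id⟩
      Sinv_lip := ⟨1, LipschitzWith.id⟩
      recon := hsum }, rfl, rfl, rfl⟩
end
end

section
/- Let ({f_n}_n, {τ_n}_n) be a Lipschitz p-ASF for a subset M of a Banach space X whose canonical dual is again a Lipschitz p-ASF for M. If a and b are a lower and an upper Lipschitz frame bound for ({f_n}_n, {τ_n}_n), then 1/b and 1/a are a lower and an upper Lipschitz frame bound for the canonical dual, i.e. (1/b)‖x − y‖ ≤ ‖Σ_{n=1}^∞ (f_n(S_{f,τ}^{-1} x) − f_n(S_{f,τ}^{-1} y)) S_{f,τ}^{-1} τ_n‖ ≤ (1/a)‖x − y‖ for all x, y ∈ M. Moreover, if a and b are the optimal Lipschitz frame bounds for ({f_n}_n, {τ_n}_n), then 1/b and 1/a are the optimal Lipschitz frame bounds for the canonical dual. -/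
open Filter
open scoped ENNReal NNReal

noncomputable section

/-- The series `∑ₙ (fₙ(x) − fₙ(y)) τₙ` of a Lipschitz p-ASF converges to `S x − S y`, so
frame bounds are expressed through the frame map: `a` and `b` are a lower and an upper
Lipschitz frame bound iff `a‖x − y‖ ≤ ‖S x − S y‖ ≤ b‖x − y‖` for all `x, y ∈ M`. -/
def LipPASF.IsLowerBound {𝕂 X : Type*} [RCLike 𝕂] [NormedAddCommGroup X] [NormedSpace 𝕂 X]
    {p : ℝ≥0∞} [Fact (1 ≤ p)] {M : Set X} (F : LipPASF 𝕂 X p M) (a : ℝ) : Prop :=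
  0 < a ∧ ∀ x y : M, a * ‖(x : X) - (y : X)‖ ≤ ‖(F.S x : X) - (F.S y : X)‖

def LipPASF.IsUpperBound {𝕂 X : Type*} [RCLike 𝕂] [NormedAddCommGroup X] [NormedSpace 𝕂 X]
    {p : ℝ≥0∞} [Fact (1 ≤ p)] {M : Set X} (F : LipPASF 𝕂 X p M) (b : ℝ) : Prop :=
  0 < b ∧ ∀ x y : M, ‖(F.S x : X) - (F.S y : X)‖ ≤ b * ‖(x : X) - (y : X)‖

/-- If `G` is the canonical dual of a Lipschitz p-ASF `F` (itself a Lipschitz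
p-ASF), and `a`, `b` are a lower and an upper Lipschitz frame bound for `F`, then `1/b` and
`1/a` are a lower and an upper Lipschitz frame bound for `G`; moreover, optimal bounds for
`F` give optimal bounds `1/b`, `1/a` for `G`. -/
theorem stmt8 {𝕂 X : Type*} [RCLike 𝕂] [NormedAddCommGroup X] [NormedSpace 𝕂 X]
    [CompleteSpace X] (p : ℝ≥0∞) [Fact (1 ≤ p)] (hp : p ≠ ∞) (M : Set X)
    (F G : LipPASF 𝕂 X p M)
    (hGf : ∀ n (x : M), G.f n x = F.f n (F.Sinv x)) (hGτ : ∀ n, G.τ n = F.Sinv (F.τ n))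
    (a b : ℝ) (ha : F.IsLowerBound a) (hb : F.IsUpperBound b) :
    (G.IsLowerBound (1 / b) ∧ G.IsUpperBound (1 / a)) ∧
    (((∀ a', F.IsLowerBound a' → a' ≤ a) ∧ (∀ b', F.IsUpperBound b' → b ≤ b')) →
      ((∀ a', G.IsLowerBound a' → a' ≤ 1 / b) ∧ (∀ b', G.IsUpperBound b' → 1 / a ≤ b'))) := by
  obtain ⟨ha0, ha2⟩ := ha
  obtain ⟨hb0, hb2⟩ := hb
  -- G.S = F.Sinv
  have hGS : ∀ x : M, G.S x = F.Sinv x := by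
    intro x
    have h1 := G.S_sum x
    have h2 := F.recon (F.Sinv x)
    have heq : (fun N => ∑ n ∈ Finset.range N, G.f n x • ((G.τ n : X)))
        = fun N => ∑ n ∈ Finset.range N, F.f n (F.Sinv x) • ((F.Sinv (F.τ n) : X)) := by
      funext N; refine Finset.sum_congr rfl fun n _ => ?_
      rw [hGf, hGτ]
    rw [heq] at h1
    have := tendsto_nhds_unique h1 h2
    exact Subtype.coe_injective this
  -- key two-sided bounds linking F and G
  have key : ∀ x y : M,
      (1 / b) * ‖(x : X) - (y : X)‖ ≤ ‖(G.S x : X) - (G.S y : X)‖ ∧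
      ‖(G.S x : X) - (G.S y : X)‖ ≤ (1 / a) * ‖(x : X) - (y : X)‖ := by
    intro x y
    rw [hGS x, hGS y]
    have hl := ha2 (F.Sinv x) (F.Sinv y)
    have hu := hb2 (F.Sinv x) (F.Sinv y)
    rw [F.right_inv, F.right_inv] at hl hu
    constructor
    · rw [div_mul_eq_mul_div, div_le_iff₀ hb0]
      nlinarith [hu]
    · rw [div_mul_eq_mul_div, le_div_iff₀ ha0]
      nlinarith [hl]
  refine ⟨⟨⟨by positivity, fun x y => (key x y).1⟩, ⟨by positivity, fun x y => (key x y).2⟩⟩, ?_⟩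
  rintro ⟨hopta, hoptb⟩
  constructor
  · intro a' ⟨ha'0, ha'2⟩
    -- a' lower bound for G ⇒ 1/a' upper bound for F ⇒ b ≤ 1/a' ⇒ a' ≤ 1/b
    have hub : F.IsUpperBound (1 / a') := by
      refine ⟨by positivity, fun u v => ?_⟩
      have := ha'2 (F.S u) (F.S v)
      rw [hGS, hGS, F.left_inv, F.left_inv] at this
      rw [div_mul_eq_mul_div, le_div_iff₀ ha'0]
      nlinarith [this]
    have hba : b ≤ 1 / a' := hoptb _ hub
    rw [le_div_iff₀ ha'0] at hba
    rw [le_div_iff₀ hb0]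
    nlinarith [hba]
  · intro b' ⟨hb'0, hb'2⟩
    have hlb : F.IsLowerBound (1 / b') := by
      refine ⟨by positivity, fun u v => ?_⟩
      have := hb'2 (F.S u) (F.S v)
      rw [hGS, hGS, F.left_inv, F.left_inv] at this
      rw [div_mul_eq_mul_div, div_le_iff₀ hb'0]
      nlinarith [this]
    have := hopta _ hlb
    rw [div_le_iff₀ hb'0] at this
    rw [div_le_iff₀ ha0]
    nlinarith [this]
end
end

section
/- Let ({f_n}_n, {τ_n}_n) be a Lipschitz p-ASF for a subset M of a Banach space X. A Lipschitz p-ASF ({g_n}_n, {ω_n}_n) for M is a dual of ({f_n}_n, {τ_n}_n) if and only if g_n = ζ_n ∘ U and ω_n = V e_n for all n ∈ ℕ, where U : M → ℓ^p(ℕ) is a Lipschitz right-inverse of θ_τ (i.e. θ_τ(Ux) = x for all x ∈ M) and V : ℓ^p(ℕ) → X is a bounded linear left-inverse of θ_f (i.e. V(θ_f x) = x for all x ∈ M) such that V(U(M)) ⊆ M, V e_n ∈ M for all n ∈ ℕ, VU : M → M is an invertible bi-Lipschitz map, and x = Σ_{n=1}^∞ ζ_n(Ux) (VU)^{-1}(V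 e_n) for all x ∈ M. -/
/-!
For a dual `(g, ω)` take `U = θ_g`, `V = θ_ω`, `W = S_{g,ω}` and `σ = ω`: the two duality
identities say precisely `θ_τ ∘ θ_g = id` and `θ_ω ∘ θ_f = id` on `M`. Conversely, `gₙ = ζₙ ∘ U`
turns `x = θ_τ (U x)` into `x = ∑ gₙ(x) τₙ`, and expanding `θ_f x = ∑ fₙ(x) eₙ` in `ℓᵖ`
(this is where `p < ∞` enters) and applying `V` gives `x = ∑ fₙ(x) ωₙ`.
-/

open Filter Topology
open scoped ENNReal NNReal

noncomputable section

theorem lp.hasSum_smul_single_one {α 𝕂 : Type*} [DecidableEq α] [RCLike 𝕂] {p : ℝ≥0∞}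
    [Fact (1 ≤ p)] (hp : p ≠ ∞) (a : lp (fun _ : α => 𝕂) p) :
    HasSum (fun i => a i • lp.single p i (1 : 𝕂)) a := by
  simpa only [← lp.single_smul, smul_eq_mul, mul_one] using lp.hasSum_single hp a

theorem ContinuousLinearMap.tendsto_sum_smul_apply_lp_single {𝕂 X : Type*} [RCLike 𝕂]
    [NormedAddCommGroup X] [NormedSpace 𝕂 X] {p : ℝ≥0∞} [Fact (1 ≤ p)] (hp : p ≠ ∞)
    (V : lp (fun _ : ℕ => 𝕂) p →L[𝕂] X) (a : lp (fun _ : ℕ => 𝕂) p) :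
    Tendsto (fun N => ∑ n ∈ Finset.range N, a n • V (lp.single p n 1)) atTop (𝓝 (V a)) := by
  simpa only [map_smul] using (V.hasSum (lp.hasSum_smul_single_one hp a)).tendsto_sum_nat

namespace LipPASF

variable {𝕂 X : Type*} [RCLike 𝕂] [NormedAddCommGroup X] [NormedSpace 𝕂 X] {p : ℝ≥0∞}
  [Fact (1 ≤ p)] {M : Set X} (F : LipPASF 𝕂 X p M)

theorem tendsto_sum_smul_τ_iff (a : lp (fun _ : ℕ => 𝕂) p) (y : X) :
    Tendsto (fun N => ∑ n ∈ Finset.range N, a n • (F.τ n : X)) atTop (𝓝 y) ↔ F.θτ a = y :=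
  ⟨tendsto_nhds_unique (F.θτ_sum a), fun h => h ▸ F.θτ_sum a⟩

theorem τ_eq_θτ_single (n : ℕ) : (F.τ n : X) = F.θτ (lp.single p n 1) := by
  refine ((F.tendsto_sum_smul_τ_iff _ _).1 ?_).symm
  have h := hasSum_single (f := fun m => lp.single (E := fun _ : ℕ => 𝕂) p n 1 m • (F.τ m : X)) n
    fun m hm => by simp [hm]
  simpa only [lp.single_apply_self, one_smul] using h.tendsto_sum_nat

theorem θτ_θf (x : M) : F.θτ (F.θf x) = F.S x :=
  (F.tendsto_sum_smul_τ_iff _ _).1 (by simpa only [F.θf_apply] using F.S_sum x)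

end LipPASF

theorem stmt9_general {𝕂 X : Type*} [RCLike 𝕂] [NormedAddCommGroup X] [NormedSpace 𝕂 X]
    (p : ℝ≥0∞) [Fact (1 ≤ p)] (hp : p ≠ ∞) (M : Set X)
    (F G : LipPASF 𝕂 X p M) :
    ((∀ x : M, Tendsto (fun N => ∑ n ∈ Finset.range N, G.f n x • ((F.τ n : X)))
        atTop (nhds ((x : X)))) ∧
     (∀ x : M, Tendsto (fun N => ∑ n ∈ Finset.range N, F.f n x • ((G.τ n : X)))
        atTop (nhds ((x : X))))) ↔
    ∃ (U : M → lp (fun _ : ℕ => 𝕂) p) (V : lp (fun _ : ℕ => 𝕂) p →L[𝕂] X)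
      (W Winv : M → M) (σ : ℕ → M),
      (∃ K : ℝ≥0, LipschitzWith K U) ∧
      (∀ x : M, F.θτ (U x) = (x : X)) ∧
      (∀ x : M, V (F.θf x) = (x : X)) ∧
      (∀ n (x : M), G.f n x = U x n) ∧
      (∀ n, (G.τ n : X) = V (lp.single p n (1 : 𝕂))) ∧
      (∀ x : M, (W x : X) = V (U x)) ∧
      (∀ n, (σ n : X) = V (lp.single p n (1 : 𝕂))) ∧
      (∀ x, Winv (W x) = x) ∧ (∀ x, W (Winv x) = x) ∧
      (∃ K : ℝ≥0, LipschitzWith K W) ∧ (∃ K : ℝ≥0, LipschitzWith K Winv) ∧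
      (∀ x : M, Tendsto (fun N => ∑ n ∈ Finset.range N, (U x n) • ((Winv (σ n) : X)))
        atTop (nhds ((x : X)))) := by
  constructor
  · rintro ⟨hGF, hFG⟩
    have hU (x : M) : F.θτ (G.θf x) = x :=
      (F.tendsto_sum_smul_τ_iff _ _).1 (by simpa only [G.θf_apply] using hGF x)
    have hV (x : M) : G.θτ (F.θf x) = x :=
      (G.tendsto_sum_smul_τ_iff _ _).1 (by simpa only [F.θf_apply] using hFG x)
    exact ⟨G.θf, G.θτ, G.S, G.Sinv, G.τ, G.θf_lip, hU, hV, fun n x => (G.θf_apply x n).symm,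
      G.τ_eq_θτ_single, fun x => (G.θτ_θf x).symm, G.τ_eq_θτ_single, G.left_inv, G.right_inv,
      G.S_lip, G.Sinv_lip, by simpa only [G.θf_apply] using G.recon⟩
  · rintro ⟨U, V, -, -, -, -, hU, hV, hg, hω, -⟩
    refine ⟨fun x => ?_, fun x => ?_⟩
    · simpa only [hg] using (F.tendsto_sum_smul_τ_iff _ _).2 (hU x)
    · simpa only [hω, F.θf_apply, hV] using V.tendsto_sum_smul_apply_lp_single hp (F.θf x)

/-- A Lipschitz p-ASF `(g, ω)` is a dual of `(f, τ)` iff `gₙ = ζₙ ∘ U`,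
`ωₙ = V eₙ` where `U : M → ℓᵖ` is a Lipschitz right-inverse of `θτ`, `V : ℓᵖ → X` is a
bounded linear left-inverse of `θf`, `V(U(M)) ⊆ M` (the map `VU : M → M` is `W` below),
`V eₙ ∈ M` (the sequence `σ` below), `W` is an invertible bi-Lipschitz map and
`x = ∑ₙ ζₙ(Ux) • W⁻¹(V eₙ)` for all `x ∈ M`. -/
theorem stmt9 {𝕂 X : Type*} [RCLike 𝕂] [NormedAddCommGroup X] [NormedSpace 𝕂 X]
    [CompleteSpace X] (p : ℝ≥0∞) [Fact (1 ≤ p)] (hp : p ≠ ∞) (M : Set X)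
    (F G : LipPASF 𝕂 X p M) :
    ((∀ x : M, Tendsto (fun N => ∑ n ∈ Finset.range N, G.f n x • ((F.τ n : X)))
        atTop (nhds ((x : X)))) ∧
     (∀ x : M, Tendsto (fun N => ∑ n ∈ Finset.range N, F.f n x • ((G.τ n : X)))
        atTop (nhds ((x : X))))) ↔
    ∃ (U : M → lp (fun _ : ℕ => 𝕂) p) (V : lp (fun _ : ℕ => 𝕂) p →L[𝕂] X)
      (W Winv : M → M) (σ : ℕ → M),
      (∃ K : ℝ≥0, LipschitzWith K U) ∧
      (∀ x : M, F.θτ (U x) = (x : X)) ∧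
      (∀ x : M, V (F.θf x) = (x : X)) ∧
      (∀ n (x : M), G.f n x = U x n) ∧
      (∀ n, (G.τ n : X) = V (lp.single p n (1 : 𝕂))) ∧
      (∀ x : M, (W x : X) = V (U x)) ∧
      (∀ n, (σ n : X) = V (lp.single p n (1 : 𝕂))) ∧
      (∀ x, Winv (W x) = x) ∧ (∀ x, W (Winv x) = x) ∧
      (∃ K : ℝ≥0, LipschitzWith K W) ∧ (∃ K : ℝ≥0, LipschitzWith K Winv) ∧
      (∀ x : M, Tendsto (fun N => ∑ n ∈ Finset.range N, (U x n) • ((Winv (σ n) : X)))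
        atTop (nhds ((x : X)))) :=
  stmt9_general p hp M F G
end
end

section
/- Let ({f_n}_n, {τ_n}_n) be a Lipschitz p-ASF for a subset M of a Banach space X, and assume in addition that θ_τ(ℓ^p(ℕ)) ⊆ M. Then a map R : M → ℓ^p(ℕ) is a Lipschitz right-inverse of θ_τ (i.e. R is Lipschitz and θ_τ(Rx) = x for all x ∈ M) if and only if R = θ_f ∘ S_{f,τ}^{-1} + (I_{ℓ^p(ℕ)} − θ_f ∘ S_{f,τ}^{-1} ∘ θ_τ) ∘ U for some Lipschitz map U : M → ℓ^p(ℕ). -/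
open Filter
open scoped ENNReal NNReal

noncomputable section

theorem LipPASF.θτ_θf_s10 {𝕂 X : Type*} [RCLike 𝕂] [NormedAddCommGroup X] [NormedSpace 𝕂 X]
    {p : ℝ≥0∞} [Fact (1 ≤ p)] {M : Set X} (F : LipPASF 𝕂 X p M) (x : M) :
    F.θτ (F.θf x) = (F.S x : X) := by
  have h1 := F.θτ_sum (F.θf x)
  have h2 := F.S_sum x
  have : (fun N => ∑ n ∈ Finset.range N, F.θf x n • ((F.τ n : X)))
      = fun N => ∑ n ∈ Finset.range N, F.f n x • ((F.τ n : X)) := by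
    funext N; exact Finset.sum_congr rfl fun n _ => by rw [F.θf_apply]
  rw [this] at h1
  exact tendsto_nhds_unique h1 h2

/-- Assume `θτ(ℓᵖ) ⊆ M`. A map `R : M → ℓᵖ` is a Lipschitz right-inverse of
`θτ` iff `R = θf ∘ S⁻¹ + (I − θf ∘ S⁻¹ ∘ θτ) ∘ U` for some Lipschitz map `U : M → ℓᵖ`. -/
theorem stmt10 {𝕂 X : Type*} [RCLike 𝕂] [NormedAddCommGroup X] [NormedSpace 𝕂 X]
    [CompleteSpace X] (p : ℝ≥0∞) [Fact (1 ≤ p)] (hp : p ≠ ∞) (M : Set X)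
    (F : LipPASF 𝕂 X p M) (hrange : ∀ a : lp (fun _ : ℕ => 𝕂) p, F.θτ a ∈ M)
    (R : M → lp (fun _ : ℕ => 𝕂) p) :
    ((∃ K : ℝ≥0, LipschitzWith K R) ∧ ∀ x : M, F.θτ (R x) = (x : X)) ↔
    ∃ U : M → lp (fun _ : ℕ => 𝕂) p, (∃ K : ℝ≥0, LipschitzWith K U) ∧
      ∀ x : M, R x = F.θf (F.Sinv x) + (U x - F.θf (F.Sinv ⟨F.θτ (U x), hrange (U x)⟩)) := by
  have key : ∀ x : M, F.θτ (F.θf (F.Sinv x)) = (x : X) := fun x => by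
    rw [F.θτ_θf_s10, F.right_inv]
  constructor
  · rintro ⟨⟨K, hK⟩, hR⟩
    refine ⟨R, ⟨K, hK⟩, fun x => ?_⟩
    have : (⟨F.θτ (R x), hrange (R x)⟩ : M) = x := Subtype.ext (hR x)
    rw [this]
    abel
  · rintro ⟨U, ⟨KU, hU⟩, hRU⟩
    obtain ⟨Kf, hKf⟩ := F.θf_lip
    obtain ⟨Ks, hKs⟩ := F.Sinv_lip
    have hg : LipschitzWith ‖F.θτ‖₊ (fun a : lp (fun _ : ℕ => 𝕂) p =>
        (⟨F.θτ a, hrange a⟩ : M)) := LipschitzWith.subtype_mk F.θτ.lipschitz _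
    constructor
    · refine ⟨Kf * Ks + (KU + Kf * Ks * (‖F.θτ‖₊ * KU)), ?_⟩
      have h1 : LipschitzWith (Kf * Ks) (fun x : M => F.θf (F.Sinv x)) := hKf.comp hKs
      have h2 : LipschitzWith (Kf * Ks * (‖F.θτ‖₊ * KU))
          (fun x : M => F.θf (F.Sinv ⟨F.θτ (U x), hrange (U x)⟩)) :=
        (hKf.comp hKs).comp (hg.comp hU)
      have : LipschitzWith (Kf * Ks + (KU + Kf * Ks * (‖F.θτ‖₊ * KU)))
          (fun x : M => F.θf (F.Sinv x) +
            (U x - F.θf (F.Sinv ⟨F.θτ (U x), hrange (U x)⟩))) := h1.add (hU.sub h2)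
      have heq : R = fun x : M => F.θf (F.Sinv x) +
          (U x - F.θf (F.Sinv ⟨F.θτ (U x), hrange (U x)⟩)) := funext hRU
      rw [heq]; exact this
    · intro x
      rw [hRU x, map_add, map_sub, key x, key ⟨F.θτ (U x), hrange (U x)⟩]
      abel
end
end

section
/- Let ({f_n}_n, {τ_n}_n) and ({g_n}_n, {ω_n}_n) be two Lipschitz p-SFs for a subset M of a Banach space X such that ({g_n}_n, {ω_n}_n) is orthogonal to ({f_n}_n, {τ_n}_n). Let A, B : M → M be bi-Lipschitz maps, let C, D : X → X be bounded linear operators with C(M) ⊆ M and D(M) ⊆ M, suppose C(Ax) + D(Bx) = x for all x ∈ M, and suppose Cτ_n + Dω_n ∈ M for all n ∈ ℕ. Then ({f_n ∘ A + g_n ∘ B}_n, {Cτ_n + Dω_n}_n) is a Lipschitz p-SF for M. In particular, if scalars a, b, c, d satisfy ca + db = 1 and cτ_n + dω_n ∈ M for all n, then ({a f_n + b g_n}_n, {c τ_n + d ω_n}_n) is a Lipschitz p-SF for M. -/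
open Filter
open scoped ENNReal NNReal

noncomputable section

/-
Everything is read off at the level of operators. For a Lipschitz p-Schauder frame the
synthesis operator inverts the analysis map, `θ_τ θ_f = S_{f,τ} = I_M`, and orthogonality says
`θ_τ θ_g = 0 = θ_ω θ_f`. The candidate frame has analysis map `x ↦ θ_f (Ax) + θ_g (Bx)` and
synthesis operator `Cθ_τ + Dθ_ω`; expanding their composite, the cross terms vanish and what
is left is `C(Ax) + D(Bx) = x`.
-/

open Topology

section PartialSums

variable {𝕂 X Y : Type*} [RCLike 𝕂] [NormedAddCommGroup X] [NormedSpace 𝕂 X]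
  [NormedAddCommGroup Y] [NormedSpace 𝕂 Y]

theorem tendsto_sum_smul_map {α : ℕ → 𝕂} {u : ℕ → X} {U : X} (L : X →L[𝕂] Y)
    (h : Tendsto (fun N => ∑ n ∈ Finset.range N, α n • u n) atTop (𝓝 U)) :
    Tendsto (fun N => ∑ n ∈ Finset.range N, α n • L (u n)) atTop (𝓝 (L U)) := by
  simpa only [Function.comp_def, map_sum, map_smul] using (L.continuous.tendsto U).comp h

theorem tendsto_sum_smul_map_add {α : ℕ → 𝕂} {u v : ℕ → X} {U V : X} (C D : X →L[𝕂] Y)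
    (hu : Tendsto (fun N => ∑ n ∈ Finset.range N, α n • u n) atTop (𝓝 U))
    (hv : Tendsto (fun N => ∑ n ∈ Finset.range N, α n • v n) atTop (𝓝 V)) :
    Tendsto (fun N => ∑ n ∈ Finset.range N, α n • (C (u n) + D (v n))) atTop
      (𝓝 (C U + D V)) := by
  simpa only [smul_add, Finset.sum_add_distrib] using
    (tendsto_sum_smul_map C hu).add (tendsto_sum_smul_map D hv)

end PartialSums

namespace LipPASF

variable {𝕂 X : Type*} [RCLike 𝕂] [NormedAddCommGroup X] [NormedSpace 𝕂 X]
  {p : ℝ≥0∞} [Fact (1 ≤ p)] {M : Set X}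

theorem tendsto_sum_f_smul_τ (F G : LipPASF 𝕂 X p M) (x : M) :
    Tendsto (fun N => ∑ n ∈ Finset.range N, F.f n x • (G.τ n : X)) atTop
      (𝓝 (G.θτ (F.θf x))) := by
  simpa only [F.θf_apply] using G.θτ_sum (F.θf x)

theorem θτ_θf_eq_of_tendsto (F G : LipPASF 𝕂 X p M) {x : M} {y : X}
    (h : Tendsto (fun N => ∑ n ∈ Finset.range N, F.f n x • (G.τ n : X)) atTop (𝓝 y)) :
    G.θτ (F.θf x) = y :=
  tendsto_nhds_unique (F.tendsto_sum_f_smul_τ G x) h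

theorem θτ_θf_eq_S (F : LipPASF 𝕂 X p M) (x : M) : F.θτ (F.θf x) = F.S x :=
  F.θτ_θf_eq_of_tendsto F (F.S_sum x)

def ofSynthesisAnalysis (f : ℕ → M → 𝕂) (τ : ℕ → M)
    (θf : M → lp (fun _ : ℕ => 𝕂) p) (θf_apply : ∀ (x : M) (n : ℕ), θf x n = f n x)
    (θf_lip : ∃ K : ℝ≥0, LipschitzWith K θf) (θτ : lp (fun _ : ℕ => 𝕂) p →L[𝕂] X)
    (θτ_sum : ∀ a : lp (fun _ : ℕ => 𝕂) p,
      Tendsto (fun N => ∑ n ∈ Finset.range N, a n • (τ n : X)) atTop (𝓝 (θτ a)))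
    (θτ_θf : ∀ x : M, θτ (θf x) = x) : LipPASF 𝕂 X p M :=
  have S_sum : ∀ x : M,
      Tendsto (fun N => ∑ n ∈ Finset.range N, f n x • (τ n : X)) atTop (𝓝 (x : X)) :=
    fun x => by simpa only [θf_apply, θτ_θf] using θτ_sum (θf x)
  { f, τ, θf, θf_apply, θf_lip, θτ, θτ_sum, S_sum
    f_lip := fun n => by
      obtain ⟨K, hK⟩ := θf_lip
      have hf : (fun x => θf x n) = f n := funext fun x => θf_apply x n
      rw [← hf]
      exact ⟨_, (lp.evalCLM 𝕂 (fun _ : ℕ => 𝕂) p n).lipschitz.comp hK⟩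
    S := id
    Sinv := id
    left_inv := fun _ => rfl
    right_inv := fun _ => rfl
    S_lip := ⟨1, LipschitzWith.id⟩
    Sinv_lip := ⟨1, LipschitzWith.id⟩
    recon := S_sum }

theorem exists_interpolate (F G : LipPASF 𝕂 X p M) (hFS : F.S = id) (hGS : G.S = id)
    (horth₁ : ∀ x : M, Tendsto (fun N => ∑ n ∈ Finset.range N, G.f n x • (F.τ n : X))
      atTop (𝓝 0))
    (horth₂ : ∀ x : M, Tendsto (fun N => ∑ n ∈ Finset.range N, F.f n x • (G.τ n : X))
      atTop (𝓝 0))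
    (a b : 𝕂) {A B : M → M} (hA : ∃ K : ℝ≥0, LipschitzWith K A)
    (hB : ∃ K : ℝ≥0, LipschitzWith K B) (C D : X →L[𝕂] X)
    (hCD : ∀ x : M, a • C (A x : X) + b • D (B x : X) = x)
    (hmem : ∀ n, C (F.τ n : X) + D (G.τ n : X) ∈ M) :
    ∃ H : LipPASF 𝕂 X p M,
      (∀ n (x : M), H.f n x = a * F.f n (A x) + b * G.f n (B x)) ∧
      (∀ n, (H.τ n : X) = C (F.τ n : X) + D (G.τ n : X)) ∧
      H.S = id := by
  have hFF (x : M) : F.θτ (F.θf x) = x := by rw [θτ_θf_eq_S, hFS, id]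
  have hGG (x : M) : G.θτ (G.θf x) = x := by rw [θτ_θf_eq_S, hGS, id]
  have hGF (x : M) : F.θτ (G.θf x) = 0 := G.θτ_θf_eq_of_tendsto F (horth₁ x)
  have hFG (x : M) : G.θτ (F.θf x) = 0 := F.θτ_θf_eq_of_tendsto G (horth₂ x)
  refine ⟨ofSynthesisAnalysis (fun n x => a * F.f n (A x) + b * G.f n (B x))
    (fun n => ⟨_, hmem n⟩) (fun x => a • F.θf (A x) + b • G.θf (B x)) ?_ ?_
    (C.comp F.θτ + D.comp G.θτ) ?_ ?_, fun _ _ => rfl, fun _ => rfl, rfl⟩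
  · intro x n
    simp only [lp.coeFn_add, lp.coeFn_smul, Pi.add_apply, Pi.smul_apply, smul_eq_mul,
      F.θf_apply, G.θf_apply]
  · obtain ⟨KA, hA⟩ := hA
    obtain ⟨KB, hB⟩ := hB
    obtain ⟨KF, hF⟩ := F.θf_lip
    obtain ⟨KG, hG⟩ := G.θf_lip
    exact ⟨_, ((lipschitzWith_smul a).comp (hF.comp hA)).add
      ((lipschitzWith_smul b).comp (hG.comp hB))⟩
  · exact fun s => tendsto_sum_smul_map_add C D (F.θτ_sum s) (G.θτ_sum s)
  · intro x
    simp only [add_apply, ContinuousLinearMap.comp_apply, map_add,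
      map_smul, hFF, hGG, hGF, hFG, map_zero, add_zero, zero_add, hCD]

end LipPASF

theorem stmt16_general {𝕂 X : Type*} [RCLike 𝕂] [NormedAddCommGroup X] [NormedSpace 𝕂 X]
    (p : ℝ≥0∞) [Fact (1 ≤ p)] (M : Set X)
    (F G : LipPASF 𝕂 X p M) (hFS : F.S = id) (hGS : G.S = id)
    (horth₁ : ∀ x : M, Tendsto (fun N => ∑ n ∈ Finset.range N, G.f n x • ((F.τ n : X)))
      atTop (nhds (0 : X)))
    (horth₂ : ∀ x : M, Tendsto (fun N => ∑ n ∈ Finset.range N, F.f n x • ((G.τ n : X)))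
      atTop (nhds (0 : X)))
    (A B : M → M)
    (hA : ∃ K : ℝ≥0, LipschitzWith K A)
    (hB : ∃ K : ℝ≥0, LipschitzWith K B)
    (C D : X →L[𝕂] X)
    (hCD : ∀ x : M, C ((A x : X)) + D ((B x : X)) = (x : X))
    (hmem : ∀ n, C ((F.τ n : X)) + D ((G.τ n : X)) ∈ M) :
    (∃ H : LipPASF 𝕂 X p M,
      (∀ n (x : M), H.f n x = F.f n (A x) + G.f n (B x)) ∧
      (∀ n, (H.τ n : X) = C ((F.τ n : X)) + D ((G.τ n : X))) ∧
      H.S = id) ∧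
    (∀ a b c d : 𝕂, c * a + d * b = 1 →
      (∀ n, c • ((F.τ n : X)) + d • ((G.τ n : X)) ∈ M) →
      ∃ H : LipPASF 𝕂 X p M,
        (∀ n (x : M), H.f n x = a * F.f n x + b * G.f n x) ∧
        (∀ n, (H.τ n : X) = c • ((F.τ n : X)) + d • ((G.τ n : X))) ∧
        H.S = id) := by
  constructor
  · simpa only [one_mul, one_smul] using
      F.exists_interpolate G hFS hGS horth₁ horth₂ 1 1 hA hB C D (by simpa only [one_smul])
        hmem
  · intro a b c d habcd hmem'
    have hid (x : M) : a • (c • ContinuousLinearMap.id 𝕂 X) (id x : X)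
        + b • (d • ContinuousLinearMap.id 𝕂 X) (id x : X) = x := by
      simp only [smul_apply, ContinuousLinearMap.id_apply, id_eq, smul_smul,
        ← add_smul, mul_comm a, mul_comm b, habcd, one_smul]
    obtain ⟨H, hf, hτ, hS⟩ := F.exists_interpolate G hFS hGS horth₁ horth₂ a b
      ⟨1, LipschitzWith.id⟩ ⟨1, LipschitzWith.id⟩ (c • .id 𝕂 X) (d • .id 𝕂 X) hid hmem'
    exact ⟨H, hf, hτ, hS⟩

/-- Interpolation of two orthogonal Lipschitz p-SFs `(f, τ)` and `(g, ω)`: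
if `A, B : M → M` are bi-Lipschitz, `C, D : X → X` are bounded linear with `C(M) ⊆ M`,
`D(M) ⊆ M`, `CA + DB = I_M` and `Cτₙ + Dωₙ ∈ M`, then `({fₙA + gₙB}, {Cτₙ + Dωₙ})` is a
Lipschitz p-SF for `M`; in particular this holds for scalars `a, b, c, d` with `ca + db = 1`. -/
theorem stmt16 {𝕂 X : Type*} [RCLike 𝕂] [NormedAddCommGroup X] [NormedSpace 𝕂 X]
    [CompleteSpace X] (p : ℝ≥0∞) [Fact (1 ≤ p)] (hp : p ≠ ∞) (M : Set X)
    (F G : LipPASF 𝕂 X p M) (hFS : F.S = id) (hGS : G.S = id)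
    (horth₁ : ∀ x : M, Tendsto (fun N => ∑ n ∈ Finset.range N, G.f n x • ((F.τ n : X)))
      atTop (nhds (0 : X)))
    (horth₂ : ∀ x : M, Tendsto (fun N => ∑ n ∈ Finset.range N, F.f n x • ((G.τ n : X)))
      atTop (nhds (0 : X)))
    (A B : M → M)
    (hA : ∃ K : ℝ≥0, LipschitzWith K A) (hA' : ∃ K : ℝ≥0, AntilipschitzWith K A)
    (hB : ∃ K : ℝ≥0, LipschitzWith K B) (hB' : ∃ K : ℝ≥0, AntilipschitzWith K B)
    (C D : X →L[𝕂] X) (hC : ∀ x ∈ M, C x ∈ M) (hD : ∀ x ∈ M, D x ∈ M)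
    (hCD : ∀ x : M, C ((A x : X)) + D ((B x : X)) = (x : X))
    (hmem : ∀ n, C ((F.τ n : X)) + D ((G.τ n : X)) ∈ M) :
    (∃ H : LipPASF 𝕂 X p M,
      (∀ n (x : M), H.f n x = F.f n (A x) + G.f n (B x)) ∧
      (∀ n, (H.τ n : X) = C ((F.τ n : X)) + D ((G.τ n : X))) ∧
      H.S = id) ∧
    (∀ a b c d : 𝕂, c * a + d * b = 1 →
      (∀ n, c • ((F.τ n : X)) + d • ((G.τ n : X)) ∈ M) →
      ∃ H : LipPASF 𝕂 X p M,
        (∀ n (x : M), H.f n x = a * F.f n x + b * G.f n x) ∧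
        (∀ n, (H.τ n : X) = c • ((F.τ n : X)) + d • ((G.τ n : X))) ∧
        H.S = id) :=
  stmt16_general p M F G hFS hGS horth₁ horth₂ A B hA hB C D hCD hmem
end
end

section
/- Let ({f_n}_n, {τ_n}_n) be a Lipschitz p-SF for a subset M of a Banach space X. If a Lipschitz p-ASF ({g_n}_n, {ω_n}_n) for M is both a dual of ({f_n}_n, {τ_n}_n) and similar to ({f_n}_n, {τ_n}_n), then ({g_n}_n, {ω_n}_n) is the canonical dual of ({f_n}_n, {τ_n}_n); that is, g_n = f_n ∘ S_{f,τ}^{-1} and ω_n = S_{f,τ}^{-1} τ_n for all n ∈ ℕ. In other words, the canonical dual is the only dual Lipschitz p-ASF similar to ({f_n}_n, {τ_n}_n). -/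
open Filter
open scoped ENNReal NNReal

noncomputable section

/-- For a Lipschitz p-SF `F = (f, τ)`, if a Lipschitz p-ASF `G = (g, ω)` is
both a dual of `F` and similar to `F`, then `G` is the canonical dual of `F`:
`gₙ = fₙ ∘ S⁻¹` and `ωₙ = S⁻¹ τₙ` for all `n`. -/
theorem stmt17 {𝕂 X : Type*} [RCLike 𝕂] [NormedAddCommGroup X] [NormedSpace 𝕂 X]
    [CompleteSpace X] (p : ℝ≥0∞) [Fact (1 ≤ p)] (hp : p ≠ ∞) (M : Set X)
    (F G : LipPASF 𝕂 X p M) (hFS : F.S = id)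
    (hdual₁ : ∀ x : M, Tendsto (fun N => ∑ n ∈ Finset.range N, G.f n x • ((F.τ n : X)))
      atTop (nhds ((x : X))))
    (hdual₂ : ∀ x : M, Tendsto (fun N => ∑ n ∈ Finset.range N, F.f n x • ((G.τ n : X)))
      atTop (nhds ((x : X))))
    (hsim : ∃ (Tfg Tfginv : M → M) (Tτω : X ≃L[𝕂] X),
      (∀ x, Tfginv (Tfg x) = x) ∧ (∀ x, Tfg (Tfginv x) = x) ∧
      (∃ K : ℝ≥0, LipschitzWith K Tfg) ∧ (∃ K : ℝ≥0, LipschitzWith K Tfginv) ∧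
      (∀ x ∈ M, Tτω x ∈ M) ∧
      (∀ n (x : M), G.f n x = F.f n (Tfg x)) ∧
      (∀ n, (G.τ n : X) = Tτω ((F.τ n : X)))) :
    (∀ n (x : M), G.f n x = F.f n (F.Sinv x)) ∧ (∀ n, G.τ n = F.Sinv (F.τ n)) := by
  obtain ⟨Tfg, Tfginv, Tτω, hli, hri, _, _, hTM, hg, hω⟩ := hsim
  have hSinv : ∀ x : M, F.Sinv x = x := by
    intro x; have := F.left_inv x; rwa [hFS] at this
  have hSx : ∀ x : M, Tendsto (fun N => ∑ n ∈ Finset.range N, F.f n x • ((F.τ n : X)))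
      atTop (nhds (x : X)) := by
    intro x; have := F.S_sum x; rwa [hFS] at this
  have hTfg : ∀ x : M, Tfg x = x := by
    intro x
    have h1 : Tendsto (fun N => ∑ n ∈ Finset.range N, F.f n (Tfg x) • ((F.τ n : X)))
        atTop (nhds (x : X)) := by
      have := hdual₁ x
      simpa [hg] using this
    exact Subtype.ext (tendsto_nhds_unique (hSx (Tfg x)) h1)
  have hTτω : ∀ x : M, Tτω (x : X) = (x : X) := by
    intro x
    have h1 : Tendsto (fun N => ∑ n ∈ Finset.range N, F.f n x • ((G.τ n : X)))
        atTop (nhds (Tτω (x : X))) := by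
      have h := (Tτω.continuous.tendsto (x : X)).comp (hSx x)
      refine h.congr fun N => ?_
      simp [Function.comp, map_sum, map_smul, hω]
    exact tendsto_nhds_unique h1 (hdual₂ x)
  refine ⟨fun n x => ?_, fun n => ?_⟩
  · rw [hSinv, hg, hTfg]
  · exact Subtype.ext (by rw [hSinv, hω, hTτω])
end
end

section
/- Let M be a subset of a Banach space X containing at least one nonzero element. If two Lipschitz p-ASFs ({f_n}_n, {τ_n}_n) and ({g_n}_n, {ω_n}_n) for M are similar, then they are not orthogonal; that is, it is impossible that Σ_{n=1}^∞ g_n(x) τ_n = 0 for all x ∈ M. -/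
open Filter
open scoped ENNReal NNReal

noncomputable section

/-- If `M` contains a nonzero element, then two similar Lipschitz p-ASFs
cannot be orthogonal: it is impossible that `∑ₙ gₙ(x) τₙ = 0` for all `x ∈ M`. -/
theorem stmt18 {𝕂 X : Type*} [RCLike 𝕂] [NormedAddCommGroup X] [NormedSpace 𝕂 X]
    [CompleteSpace X] (p : ℝ≥0∞) [Fact (1 ≤ p)] (hp : p ≠ ∞) (M : Set X)
    (hM : ∃ x : M, (x : X) ≠ 0)
    (F G : LipPASF 𝕂 X p M)
    (hsim : ∃ (Tfg Tfginv : M → M) (Tτω : X ≃L[𝕂] X),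
      (∀ x, Tfginv (Tfg x) = x) ∧ (∀ x, Tfg (Tfginv x) = x) ∧
      (∃ K : ℝ≥0, LipschitzWith K Tfg) ∧ (∃ K : ℝ≥0, LipschitzWith K Tfginv) ∧
      (∀ x ∈ M, Tτω x ∈ M) ∧
      (∀ n (x : M), G.f n x = F.f n (Tfg x)) ∧
      (∀ n, (G.τ n : X) = Tτω ((F.τ n : X)))) :
    ¬ (∀ x : M, Tendsto (fun N => ∑ n ∈ Finset.range N, G.f n x • ((F.τ n : X)))
        atTop (nhds (0 : X))) := by
  intro h
  obtain ⟨Tfg, Tfginv, Tτω, hli, hri, _, _, _, hf, _⟩ := hsim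
  obtain ⟨x₀, hx₀⟩ := hM
  set x : M := Tfginv (F.Sinv x₀) with hx
  have h1 : Tendsto (fun N => ∑ n ∈ Finset.range N, G.f n x • ((F.τ n : X)))
      atTop (nhds ((F.S (Tfg x) : X))) := by
    have := F.S_sum (Tfg x)
    simpa only [hf] using this
  have h0 := h x
  have heq : (F.S (Tfg x) : X) = 0 := tendsto_nhds_unique h1 h0
  rw [hx, hri, F.right_inv] at heq
  exact hx₀ heq
end
end

section
/- Let ({f_n}_n, {τ_n}_n) and ({g_n}_n, {ω_n}_n) be two Lipschitz p-SFs for a subset M of a Banach space X such that ({g_n}_n, {ω_n}_n) is orthogonal to ({f_n}_n, {τ_n}_n). Equip X ⊕ X with the norm ‖x ⊕ y‖ := (‖x‖^p + ‖y‖^p)^{1/p}, and for each n define (f_n ⊕ g_n)(x ⊕ y) := f_n(x) + g_n(y) on M ⊕ M := {x ⊕ y : x, y ∈ M} and τ_n ⊕ ω_n ∈ M ⊕ M. Then ({f_n ⊕ g_n}_n, {τ_n ⊕ ω_n}_n) is a Lipschitz p-SF for the subset M ⊕ M of the Banach space X ⊕ X. -/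
open Filter
open scoped ENNReal NNReal

noncomputable section

/-! Since `F.S = G.S = id`, the series `∑ fₙ(x) τₙ` and `∑ gₙ(y) ωₙ` converge to `x` and `y`,
while orthogonality makes `∑ fₙ(x) ωₙ` and `∑ gₙ(y) τₙ` converge to `0`. Convergence in
`X ⊕ₚ X` is coordinatewise, so `∑ (fₙ(x) + gₙ(y)) (τₙ ⊕ ωₙ) = (x ⊕ 0) + (0 ⊕ y) = x ⊕ y`.
The Lipschitz bounds pass through the 1-Lipschitz coordinate projections of `M ⊕ M`, and the
synthesis operator is `θ_τ ⊕ θ_ω`. -/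

open Topology

section

variable {R X Y : Type*} [TopologicalSpace X] [AddCommGroup X] [SMul R X]
  [TopologicalSpace Y] [AddCommGroup Y] [SMul R Y] (p : ℝ≥0∞)

theorem WithLp.tendsto_sum_smul_toLp_prod {c : ℕ → R} {u : ℕ → X} {v : ℕ → Y} {x : X} {y : Y}
    (hu : Tendsto (fun N => ∑ n ∈ Finset.range N, c n • u n) atTop (𝓝 x))
    (hv : Tendsto (fun N => ∑ n ∈ Finset.range N, c n • v n) atTop (𝓝 y)) :
    Tendsto (fun N => ∑ n ∈ Finset.range N, c n • WithLp.toLp p (u n, v n)) atTop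
      (𝓝 (WithLp.toLp p (x, y))) := by
  have h := ((WithLp.prod_continuous_toLp p X Y).tendsto (x, y)).comp (hu.prodMk_nhds hv)
  convert h using 2 with N
  simp only [Function.comp_apply, prod_mk_sum, WithLp.toLp_sum, ← Prod.smul_mk, WithLp.toLp_smul]

end

namespace LipPASF

variable {𝕂 X : Type*} [RCLike 𝕂] [NormedAddCommGroup X] [NormedSpace 𝕂 X]
  {p : ℝ≥0∞} [Fact (1 ≤ p)] {M : Set X}

variable (p) in
def prodSet (M : Set X) : Set (WithLp p (X × X)) := {z | z.fst ∈ M ∧ z.snd ∈ M}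

def prodFst (z : prodSet p M) : M := ⟨z.1.fst, z.2.1⟩

def prodSnd (z : prodSet p M) : M := ⟨z.1.snd, z.2.2⟩

def prodMk (x y : M) : prodSet p M := ⟨WithLp.toLp p ((x : X), (y : X)), x.2, y.2⟩

theorem lipschitzWith_prodFst : LipschitzWith 1 (prodFst (p := p) (M := M)) := by
  have h := (LipschitzWith.prod_fst.comp ((WithLp.prod_lipschitzWith_ofLp p X X).comp
    (LipschitzWith.subtype_val (prodSet p M)))).subtype_mk fun z => z.2.1
  rwa [mul_one, mul_one] at h

theorem lipschitzWith_prodSnd : LipschitzWith 1 (prodSnd (p := p) (M := M)) := by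
  have h := (LipschitzWith.prod_snd.comp ((WithLp.prod_lipschitzWith_ofLp p X X).comp
    (LipschitzWith.subtype_val (prodSet p M)))).subtype_mk fun z => z.2.2
  rwa [mul_one, mul_one] at h

theorem exists_lipschitzWith_add_prodFst_prodSnd {E : Type*} [SeminormedAddCommGroup E]
    {f g : M → E} (hf : ∃ K, LipschitzWith K f) (hg : ∃ K, LipschitzWith K g) :
    ∃ K, LipschitzWith K fun z : prodSet p M => f (prodFst z) + g (prodSnd z) := by
  obtain ⟨Kf, hf⟩ := hf
  obtain ⟨Kg, hg⟩ := hg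
  exact ⟨_, (hf.comp lipschitzWith_prodFst).add (hg.comp lipschitzWith_prodSnd)⟩

theorem tendsto_sum_of_S_eq_id (F : LipPASF 𝕂 X p M) (hF : F.S = id) (x : M) :
    Tendsto (fun N => ∑ n ∈ Finset.range N, F.f n x • (F.τ n : X)) atTop (𝓝 (x : X)) := by
  simpa [hF] using F.S_sum x

theorem tendsto_sum_directSum (F G : LipPASF 𝕂 X p M) (hF : F.S = id) (hG : G.S = id)
    (hGF : ∀ x : M, Tendsto (fun N => ∑ n ∈ Finset.range N, G.f n x • (F.τ n : X))
      atTop (𝓝 0))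
    (hFG : ∀ x : M, Tendsto (fun N => ∑ n ∈ Finset.range N, F.f n x • (G.τ n : X))
      atTop (𝓝 0))
    (z : prodSet p M) :
    Tendsto (fun N => ∑ n ∈ Finset.range N,
        (F.f n (prodFst z) + G.f n (prodSnd z)) • ((prodMk (F.τ n) (G.τ n) : prodSet p M) :
          WithLp p (X × X)))
      atTop (𝓝 (z : WithLp p (X × X))) := by
  have hfst := WithLp.tendsto_sum_smul_toLp_prod p
    (F.tendsto_sum_of_S_eq_id hF (prodFst z)) (hFG (prodFst z))
  have hsnd := WithLp.tendsto_sum_smul_toLp_prod p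
    (hGF (prodSnd z)) (G.tendsto_sum_of_S_eq_id hG (prodSnd z))
  convert hfst.add hsnd using 1
  · ext N
    simp only [add_smul, Finset.sum_add_distrib]
    rfl
  · rw [← WithLp.toLp_add, Prod.mk_add_mk, add_zero, zero_add]
    rfl

def directSum (F G : LipPASF 𝕂 X p M) (hF : F.S = id) (hG : G.S = id)
    (hGF : ∀ x : M, Tendsto (fun N => ∑ n ∈ Finset.range N, G.f n x • (F.τ n : X))
      atTop (𝓝 0))
    (hFG : ∀ x : M, Tendsto (fun N => ∑ n ∈ Finset.range N, F.f n x • (G.τ n : X))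
      atTop (𝓝 0)) :
    LipPASF 𝕂 (WithLp p (X × X)) p (prodSet p M) where
  f n z := F.f n (prodFst z) + G.f n (prodSnd z)
  τ n := prodMk (F.τ n) (G.τ n)
  f_lip n := exists_lipschitzWith_add_prodFst_prodSnd (F.f_lip n) (G.f_lip n)
  θf z := F.θf (prodFst z) + G.θf (prodSnd z)
  θf_apply z n := by rw [lp.coeFn_add, Pi.add_apply, F.θf_apply, G.θf_apply]
  θf_lip := exists_lipschitzWith_add_prodFst_prodSnd F.θf_lip G.θf_lip
  θτ := (WithLp.prodContinuousLinearEquiv p 𝕂 X X).symm.toContinuousLinearMap.comp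
    (F.θτ.prod G.θτ)
  θτ_sum a := WithLp.tendsto_sum_smul_toLp_prod p (F.θτ_sum a) (G.θτ_sum a)
  S := id
  S_sum := tendsto_sum_directSum F G hF hG hGF hFG
  Sinv := id
  left_inv _ := rfl
  right_inv _ := rfl
  S_lip := ⟨1, LipschitzWith.id⟩
  Sinv_lip := ⟨1, LipschitzWith.id⟩
  recon := tendsto_sum_directSum F G hF hG hGF hFG

end LipPASF

theorem stmt19_general {𝕂 X : Type*} [RCLike 𝕂] [NormedAddCommGroup X] [NormedSpace 𝕂 X]
    (p : ℝ≥0∞) [Fact (1 ≤ p)] (M : Set X)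
    (F G : LipPASF 𝕂 X p M) (hFS : F.S = id) (hGS : G.S = id)
    (horth₁ : ∀ x : M, Tendsto (fun N => ∑ n ∈ Finset.range N, G.f n x • ((F.τ n : X)))
      atTop (nhds (0 : X)))
    (horth₂ : ∀ x : M, Tendsto (fun N => ∑ n ∈ Finset.range N, F.f n x • ((G.τ n : X)))
      atTop (nhds (0 : X))) :
    ∃ H : LipPASF 𝕂 (WithLp p (X × X)) p
        {z : WithLp p (X × X) |
          (WithLp.equiv p (X × X) z).1 ∈ M ∧ (WithLp.equiv p (X × X) z).2 ∈ M},
      (∀ n (z : {z : WithLp p (X × X) |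
          (WithLp.equiv p (X × X) z).1 ∈ M ∧ (WithLp.equiv p (X × X) z).2 ∈ M}),
        H.f n z = F.f n ⟨(WithLp.equiv p (X × X) (z : WithLp p (X × X))).1, z.2.1⟩
          + G.f n ⟨(WithLp.equiv p (X × X) (z : WithLp p (X × X))).2, z.2.2⟩) ∧
      (∀ n, WithLp.equiv p (X × X) ((H.τ n : WithLp p (X × X)))
          = ((F.τ n : X), (G.τ n : X))) ∧
      H.S = id :=
  ⟨F.directSum G hFS hGS horth₁ horth₂, fun _ _ => rfl, fun _ => rfl, rfl⟩

/-- If `(f, τ)` and `(g, ω)` are two orthogonal Lipschitz p-SFs for `M ⊆ X`,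
then `({fₙ ⊕ gₙ}, {τₙ ⊕ ωₙ})` is a Lipschitz p-SF for `M ⊕ M ⊆ X ⊕ X`, where `X ⊕ X` carries
the norm `‖x ⊕ y‖ = (‖x‖^p + ‖y‖^p)^{1/p}` and `(fₙ ⊕ gₙ)(x ⊕ y) = fₙ(x) + gₙ(y)`. -/
theorem stmt19 {𝕂 X : Type*} [RCLike 𝕂] [NormedAddCommGroup X] [NormedSpace 𝕂 X]
    [CompleteSpace X] (p : ℝ≥0∞) [Fact (1 ≤ p)] (hp : p ≠ ∞) (M : Set X)
    (F G : LipPASF 𝕂 X p M) (hFS : F.S = id) (hGS : G.S = id)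
    (horth₁ : ∀ x : M, Tendsto (fun N => ∑ n ∈ Finset.range N, G.f n x • ((F.τ n : X)))
      atTop (nhds (0 : X)))
    (horth₂ : ∀ x : M, Tendsto (fun N => ∑ n ∈ Finset.range N, F.f n x • ((G.τ n : X)))
      atTop (nhds (0 : X))) :
    ∃ H : LipPASF 𝕂 (WithLp p (X × X)) p
        {z : WithLp p (X × X) |
          (WithLp.equiv p (X × X) z).1 ∈ M ∧ (WithLp.equiv p (X × X) z).2 ∈ M},
      (∀ n (z : {z : WithLp p (X × X) |
          (WithLp.equiv p (X × X) z).1 ∈ M ∧ (WithLp.equiv p (X × X) z).2 ∈ M}),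
        H.f n z = F.f n ⟨(WithLp.equiv p (X × X) (z : WithLp p (X × X))).1, z.2.1⟩
          + G.f n ⟨(WithLp.equiv p (X × X) (z : WithLp p (X × X))).2, z.2.2⟩) ∧
      (∀ n, WithLp.equiv p (X × X) ((H.τ n : WithLp p (X × X)))
          = ((F.τ n : X), (G.τ n : X))) ∧
      H.S = id :=
  stmt19_general p M F G hFS hGS horth₁ horth₂
end
end
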